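/- Let ν be a Borel measure on ℝ^d with c₀ 2^{−mn} ≤ ν(D_m^a) < ∞ for all a ∈ ℝⁿ and m ∈ ℤ, for some constant c₀ > 0. Then for all x, y, z ∈ ℝ^d and m ∈ ℤ, Λ_m^ν(x,z;y) ≤ C 2^{m(n+1)} |z̃ − ỹ|, where C depends only on n and c₀. In particular, if |z̃ − ỹ| ≤ 3√n 2^{−j} then Λ_m^ν(x,z;y) ≤ C' 2^{m(n+1)−j} with C' depending only on n and c₀. -/

import Mathlib

open MeasureTheory Set Filter ENNReal NNReal

noncomputable section

/-- Euclidean space `ℝ^k`. -/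
abbrev Euc (k : ℕ) : Type := EuclideanSpace ℝ (Fin k)

/-- Projection `x ↦ x̃` onto the first `n` coordinates. -/
def projn (n d : ℕ) (h : n ≤ d) (x : Euc d) : Euc n := WithLp.toLp 2 fun i => x (Fin.castLE h i)

/-- An odd Calderón–Zygmund kernel of homogeneity `-n` on `ℝ^d`, with constant `CK`. -/
structure IsCZKernel (n d : ℕ) (CK : ℝ) (K : Euc d → ℝ) : Prop where
  pos : 0 < CK
  odd : ∀ x : Euc d, K (-x) = -K x
  diff : ∀ x : Euc d, x ≠ 0 → DifferentiableAt ℝ K x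
  diff2 : ∀ x : Euc d, x ≠ 0 → DifferentiableAt ℝ (fderiv ℝ K) x
  bound : ∀ x : Euc d, x ≠ 0 → |K x| ≤ CK / ‖x‖ ^ n
  fderiv_bound : ∀ x : Euc d, x ≠ 0 → ‖fderiv ℝ K x‖ ≤ CK / ‖x‖ ^ (n + 1)
  fderiv2_bound : ∀ x : Euc d, x ≠ 0 → ‖fderiv ℝ (fderiv ℝ K) x‖ ≤ CK / ‖x‖ ^ (n + 2)

/-- The smooth truncation profile `φ_ℝ`: a nondecreasing `C²` function with
`χ_{[3√n,∞)} ≤ φ_ℝ ≤ χ_{[2.1√n,∞)}` (extended by `0` to all of `ℝ`). -/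
structure IsCutoff (n : ℕ) (φR : ℝ → ℝ) : Prop where
  mono : Monotone φR
  smooth : ContDiff ℝ 2 φR
  nonneg : ∀ t : ℝ, 0 ≤ φR t
  le_one : ∀ t : ℝ, φR t ≤ 1
  eq_zero : ∀ t : ℝ, t < 2.1 * Real.sqrt n → φR t = 0
  eq_one : ∀ t : ℝ, 3 * Real.sqrt n ≤ t → φR t = 1

/-- `φ_ε(x) = φ_ℝ(|x̃|/ε)`. -/
def phiE (n d : ℕ) (h : n ≤ d) (φR : ℝ → ℝ) (ε : ℝ) (x : Euc d) : ℝ :=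
  φR (‖projn n d h x‖ / ε)

/-- The map `u ↦ (u, A u)` from `ℝⁿ` to `ℝ^d`. -/
def graphMap (n d : ℕ) (h : n ≤ d) (A : Euc n → Euc (d - n)) (u : Euc n) : Euc d :=
  WithLp.toLp 2 fun (i : Fin d) => if hi : (i : ℕ) < n then u ⟨i, hi⟩
           else A u ⟨(i : ℕ) - n, by have := i.isLt; omega⟩

/-- The graph `Γ` of `A`. -/
def graphSet (n d : ℕ) (h : n ≤ d) (A : Euc n → Euc (d - n)) : Set (Euc d) :=
  Set.range (graphMap n d h A)

/-- `H^n` restricted to the graph of `A`. -/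
def graphMeasure (n d : ℕ) (h : n ≤ d) (A : Euc n → Euc (d - n)) : Measure (Euc d) :=
  (μH[(n : ℝ)]).restrict (graphSet n d h A)

/-- The measure `f · H^n_Γ`. -/
def lipGraphMeasure (n d : ℕ) (h : n ≤ d) (A : Euc n → Euc (d - n)) (f : Euc d → ℝ) :
    Measure (Euc d) :=
  (graphMeasure n d h A).withDensity fun y => ENNReal.ofReal (f y)

/-- The smoothly truncated singular integral `T^ν_{φ_ε} f(x) = ∫ φ_ε(x-y) K(x-y) f(y) dν(y)`. -/
def Tphi (n d : ℕ) (h : n ≤ d) (φR : ℝ → ℝ) (K : Euc d → ℝ) (ν : Measure (Euc d))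
    (f : Euc d → ℝ) (ε : ℝ) (x : Euc d) : ℝ :=
  ∫ y, phiE n d h φR ε (x - y) * K (x - y) * f y ∂ν

/-- The `ρ`-variation of a family `G = {G ε}_{ε > 0}`. -/
def varRho (ρ : ℝ) (G : ℝ → ℝ) : ℝ≥0∞ :=
  ⨆ (ε : ℤ → ℝ) (_ : Antitone ε) (_ : ∀ m : ℤ, 0 < ε m),
    (∑' m : ℤ, (ENNReal.ofReal |G (ε (m + 1)) - G (ε m)|) ^ ρ) ^ (1 / ρ)

/-- The oscillation of a family `G = {G ε}_{ε > 0}` with respect to a fixed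
sequence `r`. -/
def oscO (r : ℤ → ℝ) (G : ℝ → ℝ) : ℝ≥0∞ :=
  ⨆ (ε : ℤ → ℝ) (δ : ℤ → ℝ)
    (_ : ∀ m : ℤ, r (m + 1) ≤ ε m ∧ ε m ≤ δ m ∧ δ m ≤ r m),
    (∑' m : ℤ, (ENNReal.ofReal |G (ε m) - G (δ m)|) ^ (2 : ℝ)) ^ (1 / 2 : ℝ)

/-- The `λ`-jump counting function of a family `G = {G ε}_{ε > 0}`. -/
def jumpN (lam : ℝ) (G : ℝ → ℝ) : ℝ≥0∞ :=
  ⨆ (N : ℕ) (_ : ∃ ε δ : ℕ → ℝ,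
      (∀ i, i < N → 0 < ε i) ∧ (∀ i, i < N → ε i < δ i) ∧
      (∀ i, i + 1 < N → δ i ≤ ε (i + 1)) ∧
      (∀ i, i < N → lam < |G (ε i) - G (δ i)|)), (N : ℝ≥0∞)

/-- The `ρ`-variation of a `ℤ`-indexed family. -/
def varRhoZ (ρ : ℝ) (G : ℤ → ℝ) : ℝ≥0∞ :=
  ⨆ (mk : ℤ → ℤ) (_ : Antitone mk),
    (∑' k : ℤ, (ENNReal.ofReal |G (mk (k + 1)) - G (mk k)|) ^ ρ) ^ (1 / ρ)

/-- The oscillation of a `ℤ`-indexed family with respect to a fixed integer sequence `r`. -/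
def oscZ (r : ℤ → ℤ) (G : ℤ → ℝ) : ℝ≥0∞ :=
  ⨆ (ε : ℤ → ℤ) (δ : ℤ → ℤ)
    (_ : ∀ m : ℤ, r (m + 1) ≤ ε m ∧ ε m ≤ δ m ∧ δ m ≤ r m),
    (∑' m : ℤ, (ENNReal.ofReal |G (ε m) - G (δ m)|) ^ (2 : ℝ)) ^ (1 / 2 : ℝ)

/-- A cube `a + [0,b)^n ⊆ ℝⁿ`. -/
def cubeSet (n : ℕ) (a : Euc n) (b : ℝ) : Set (Euc n) :=
  {u | ∀ i : Fin n, a i ≤ u i ∧ u i < a i + b}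

/-- A "vertical" cube `D = D̃ × ℝ^{d-n}`, `D̃` a cube of `ℝⁿ`. -/
def IsVCube (n d : ℕ) (h : n ≤ d) (D : Set (Euc d)) : Prop :=
  ∃ (a : Euc n) (b : ℝ), 0 < b ∧ D = {x : Euc d | projn n d h x ∈ cubeSet n a b}

/-- The half-open v-cube with center `z` (in `ℝⁿ`) and side length `ℓ`. -/
def vQ (n d : ℕ) (h : n ≤ d) (z : Euc n) (ℓ : ℝ) : Set (Euc d) :=
  {x : Euc d | ∀ i : Fin n,
    z i - ℓ / 2 ≤ projn n d h x i ∧ projn n d h x i < z i + ℓ / 2}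

/-- The cylinder `B(z̃_Q, C_Γ ℓ(Q)) × ℝ^{d-n}` associated with the v-cube of center `z`
and side length `ℓ`. -/
def BQ (n d : ℕ) (h : n ≤ d) (CΓ : ℝ) (z : Euc n) (ℓ : ℝ) : Set (Euc d) :=
  {x : Euc d | dist (projn n d h x) z ≤ CΓ * ℓ}

/-- The grid cube `D_m^a = (a + [0, 2^{-m})^n) × ℝ^{d-n}`. -/
def Dgrid (n d : ℕ) (h : n ≤ d) (a : Euc n) (m : ℤ) : Set (Euc d) :=
  {x : Euc d | projn n d h x ∈ cubeSet n a ((2 : ℝ) ^ (-m))}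

/-- The center of the dyadic cube `2^{-m}(k + [0,1)^n)`. -/
def dyadicCenter (n : ℕ) (m : ℤ) (k : Fin n → ℤ) : Euc n :=
  WithLp.toLp 2 fun i => ((k i : ℝ) + 1 / 2) * (2 : ℝ) ^ (-m)

/-- `∫_{D^c} K(z-y) dν(y)`, understood as `lim_{M→∞} ∫_{D^c ∩ {|z-y|<M}} K(z-y) dν(y)`. -/
def Ktail (d : ℕ) (K : Euc d → ℝ) (ν : Measure (Euc d)) (D : Set (Euc d)) (z : Euc d) : ℝ :=
  limUnder atTop fun M : ℝ => ∫ y in Dᶜ ∩ Metric.ball z M, K (z - y) ∂ν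

/-- `E_D ν = ν(D)⁻¹ ∫_D ∫_{D^c} K(z-y) dν(y) dν(z)`. -/
def cubeAvg (d : ℕ) (K : Euc d → ℝ) (ν : Measure (Euc d)) (D : Set (Euc d)) : ℝ :=
  ((ν D).toReal)⁻¹ * ∫ z in D, Ktail d K ν D z ∂ν

/-- The averaged martingale `E_m ν(x) = 2^{mn} ∫_{{a : x ∈ D_m^a}} E_{D_m^a} ν da`. -/
def Em (n d : ℕ) (h : n ≤ d) (K : Euc d → ℝ) (ν : Measure (Euc d)) (m : ℤ) (x : Euc d) : ℝ :=
  (2 : ℝ) ^ (m * (n : ℤ)) *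
    ∫ a in {a : Euc n | x ∈ Dgrid n d h a m},
      cubeAvg d K ν (Dgrid n d h a m) ∂(volume : Measure (Euc n))

/-- `Λ_m^ν(x,z;y) = 2^{mn} ∫_{{a : x,z ∈ D_m^a, y ∉ D_m^a}} ν(D_m^a)⁻¹ da`. -/
def LambdaM (n d : ℕ) (h : n ≤ d) (ν : Measure (Euc d)) (m : ℤ) (x z y : Euc d) : ℝ :=
  (2 : ℝ) ^ (m * (n : ℤ)) *
    ∫ a in {a : Euc n |
        x ∈ Dgrid n d h a m ∧ z ∈ Dgrid n d h a m ∧ y ∉ Dgrid n d h a m},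
      ((ν (Dgrid n d h a m)).toReal)⁻¹ ∂(volume : Measure (Euc n))

/-- The doubly truncated maximal singular integral
`T_*ν(x) = sup_{0<ε<M} |∫_{ε<|x-y|<M} K(x-y) dν(y)|`. -/
def Tstar (d : ℕ) (K : Euc d → ℝ) (ν : Measure (Euc d)) (x : Euc d) : ℝ≥0∞ :=
  ⨆ (ε : ℝ) (M : ℝ) (_ : 0 < ε) (_ : ε < M),
    ENNReal.ofReal |∫ y in {y : Euc d | ε < dist x y ∧ dist x y < M}, K (x - y) ∂ν|

/-- `(Kφ_ε ∗ ν)(x)`, understood as `lim_{M→∞} ∫_{|x-y|<M} φ_ε(x-y) K(x-y) dν(y)`. -/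
def KphiM (n d : ℕ) (h : n ≤ d) (φR : ℝ → ℝ) (K : Euc d → ℝ) (ν : Measure (Euc d))
    (ε : ℝ) (x : Euc d) : ℝ :=
  limUnder atTop fun M : ℝ =>
    ∫ y in Metric.ball x M, phiE n d h φR ε (x - y) * K (x - y) ∂ν

/-- An (affine) `n`-plane in `ℝ^d`. -/
def IsNPlane (n d : ℕ) (L : Set (Euc d)) : Prop :=
  ∃ (p : Euc d) (φ : Euc n →ₗᵢ[ℝ] Euc d), L = Set.range fun u => p + φ u

/-- The localized Wasserstein-type distance
`dist_F(σ,ν) = sup {|∫ g dσ - ∫ g dν| : Lip(g) ≤ 1, supp g ⊆ F}`. -/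
def wdist (d : ℕ) (F : Set (Euc d)) (σ ν : Measure (Euc d)) : ℝ≥0∞ :=
  ⨆ (g : Euc d → ℝ) (_ : LipschitzWith 1 g) (_ : Function.support g ⊆ F),
    ENNReal.ofReal |(∫ y, g y ∂σ) - ∫ y, g y ∂ν|

/-- The (topological) support of a measure. -/
def msupport (d : ℕ) (μ : Measure (Euc d)) : Set (Euc d) :=
  {x : Euc d | ∀ U : Set (Euc d), IsOpen U → x ∈ U → 0 < μ U}

open Classical in
/-- The coefficient `α_μ(Q)` of the v-cube `Q` with center `z` and side length `ℓ`. -/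
def alphaC (n d : ℕ) (h : n ≤ d) (CΓ : ℝ) (μ : Measure (Euc d)) (z : Euc n) (ℓ : ℝ) :
    ℝ≥0∞ :=
  if vQ n d h z ℓ ∩ msupport d μ = ∅ then 0
  else (ENNReal.ofReal (ℓ ^ (n + 1)))⁻¹ *
    ⨅ (c : ℝ≥0) (L : Set (Euc d)) (_ : IsNPlane n d L),
      wdist d (BQ n d h CΓ z ℓ) μ ((c : ℝ≥0∞) • (μH[(n : ℝ)]).restrict L)

/-- The coefficient `β_{2,μ}(Q)` of the v-cube `Q` with center `z` and side length `ℓ`. -/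
def beta2 (n d : ℕ) (h : n ≤ d) (CΓ : ℝ) (μ : Measure (Euc d)) (z : Euc n) (ℓ : ℝ) :
    ℝ≥0∞ :=
  ⨅ (L : Set (Euc d)) (_ : IsNPlane n d L),
    ((ENNReal.ofReal (ℓ ^ n))⁻¹ *
      ∫⁻ y in vQ n d h z (CΓ * ℓ),
        ENNReal.ofReal ((Metric.infDist y L / ℓ) ^ 2) ∂μ) ^ (1 / 2 : ℝ)

/-- The average `m_Q(g) = μ(Q)⁻¹ ∫_Q g dμ`. -/
def mAvg (d : ℕ) (μ : Measure (Euc d)) (Q : Set (Euc d)) (g : Euc d → ℝ) : ℝ :=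
  ((μ Q).toReal)⁻¹ * ∫ y in Q, g y ∂μ

/-- The Hardy–Littlewood maximal operator over v-cubes. -/
def maxHL (n d : ℕ) (h : n ≤ d) (μ : Measure (Euc d)) (g : Euc d → ℝ) (x : Euc d) : ℝ≥0∞ :=
  ⨆ (Q : Set (Euc d)) (_ : IsVCube n d h Q) (_ : x ∈ Q),
    ENNReal.ofReal (mAvg d μ Q fun y => |g y|)

/-- The sharp maximal operator over v-cubes. -/
def maxSharp (n d : ℕ) (h : n ≤ d) (μ : Measure (Euc d)) (g : Euc d → ℝ) (x : Euc d) :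
    ℝ≥0∞ :=
  ⨆ (Q : Set (Euc d)) (_ : IsVCube n d h Q) (_ : x ∈ Q),
    ENNReal.ofReal (mAvg d μ Q fun y => |g y - mAvg d μ Q g|)

/-- The centered Hardy–Littlewood maximal operator `M^ν`. -/
def maxB (d : ℕ) (ν : Measure (Euc d)) (f : Euc d → ℝ) (x : Euc d) : ℝ≥0∞ :=
  ⨆ (r : ℝ) (_ : 0 < r),
    (ν (Metric.ball x r))⁻¹ * ∫⁻ y in Metric.ball x r, ENNReal.ofReal |f y| ∂ν

/-! The cubes `D_m^a` that contain `z` but not `y` are those whose corner `a` lies in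
`(z̃ - (0, 2^{-m}]ⁿ) \ (ỹ - (0, 2^{-m}]ⁿ)`. This set is covered by `n` slabs, the `i`-th of
width at most `|z̃ᵢ - ỹᵢ|` in direction `i` and `2^{-m}` in the others, so its volume is at most
`n |z̃ - ỹ| 2^{-m(n-1)}`. On it the integrand `ν(D_m^a)⁻¹` of `Λ_m^ν` is at most `c₀⁻¹ 2^{mn}`. -/

section CornerVolume

variable {n : ℕ}

lemma mem_cubeSet_iff_mem_Ioc {a u : Euc n} {b : ℝ} :
    u ∈ cubeSet n a b ↔ ∀ i, a i ∈ Ioc (u i - b) (u i) := by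
  refine forall_congr' fun i => ?_
  constructor <;> rintro ⟨h₁, h₂⟩ <;> constructor <;> linarith

lemma volume_setOf_forall_mem {t : Fin n → Set ℝ} (ht : ∀ i, MeasurableSet (t i)) :
    volume {a : Euc n | ∀ i, a i ∈ t i} = ∏ i, volume (t i) := by
  have hpre : {a : Euc n | ∀ i, a i ∈ t i} = WithLp.ofLp ⁻¹' univ.pi t := by ext; simp
  rw [hpre, ← volume_pi_pi]
  exact (PiLp.volume_preserving_ofLp (Fin n)).measure_preimage
    (MeasurableSet.univ_pi ht).nullMeasurableSet

lemma volume_Ioc_diff_Ioc_le (z y b : ℝ) :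
    volume (Ioc (z - b) z \ Ioc (y - b) y) ≤ ENNReal.ofReal |z - y| := by
  have hsub : Ioc (z - b) z \ Ioc (y - b) y ⊆ Ioc y z ∪ Ioc (z - b) (y - b) := by
    rintro t ⟨⟨h₁, h₂⟩, ht⟩
    by_cases hty : y < t
    · exact Or.inl ⟨hty, h₂⟩
    · exact Or.inr ⟨h₁, by_contra fun h => ht ⟨by linarith, by linarith⟩⟩
  calc volume (Ioc (z - b) z \ Ioc (y - b) y)
      ≤ volume (Ioc y z) + volume (Ioc (z - b) (y - b)) :=
        (measure_mono hsub).trans (measure_union_le _ _)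
    _ = ENNReal.ofReal (z - y) + ENNReal.ofReal (y - z) := by
        rw [Real.volume_Ioc, Real.volume_Ioc, sub_sub_sub_cancel_right]
    _ = ENNReal.ofReal |z - y| := by
        rcases le_total y z with h | h
        · rw [ENNReal.ofReal_of_nonpos (by linarith : y - z ≤ 0), add_zero,
            abs_of_nonneg (by linarith)]
        · rw [ENNReal.ofReal_of_nonpos (by linarith : z - y ≤ 0), zero_add,
            abs_of_nonpos (by linarith), neg_sub]

lemma volume_setOf_mem_cubeSet_notMem_le (z y : Euc n) {b : ℝ} (hb : 0 ≤ b) :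
    volume {a : Euc n | z ∈ cubeSet n a b ∧ y ∉ cubeSet n a b}
      ≤ ENNReal.ofReal (n * ‖z - y‖ * b ^ (n - 1)) := by
  classical
  set I : Fin n → Set ℝ := fun i => Ioc (z i - b) (z i)
  set J : Fin n → Set ℝ := fun i => Ioc (y i - b) (y i)
  let slab (i : Fin n) : Set (Euc n) := {a | ∀ j, a j ∈ Function.update I i (I i \ J i) j}
  have hcover : {a : Euc n | z ∈ cubeSet n a b ∧ y ∉ cubeSet n a b} ⊆ ⋃ i, slab i := by
    rintro a ⟨hz, hy⟩
    rw [mem_cubeSet_iff_mem_Ioc] at hz hy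
    push Not at hy
    obtain ⟨i, hi⟩ := hy
    refine mem_iUnion.2 ⟨i, fun j => ?_⟩
    rcases eq_or_ne j i with rfl | hji
    · rw [Function.update_self]; exact ⟨hz j, hi⟩
    · rw [Function.update_of_ne hji]; exact hz j
  have hslab (i : Fin n) : volume (slab i) ≤ ENNReal.ofReal (‖z - y‖ * b ^ (n - 1)) := by
    have hmeas (j : Fin n) : MeasurableSet (Function.update I i (I i \ J i) j) := by
      rcases eq_or_ne j i with rfl | hji
      · simpa using measurableSet_Ioc.diff measurableSet_Ioc
      · simpa [hji] using measurableSet_Ioc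
    have hcoord : |z i - y i| ≤ ‖z - y‖ := by
      simpa using PiLp.norm_apply_le (z - y) i
    rw [volume_setOf_forall_mem hmeas,
      Finset.prod_congr rfl fun j _ =>
        Function.apply_update (fun _ => (volume : Measure ℝ)) I i _ j,
      Finset.prod_update_of_mem (Finset.mem_univ i)]
    calc volume (I i \ J i) * ∏ j ∈ Finset.univ \ {i}, volume (I j)
        = volume (I i \ J i) * ENNReal.ofReal b ^ (n - 1) := by
          simp [I, Real.volume_Ioc, Finset.card_sdiff]
      _ ≤ ENNReal.ofReal ‖z - y‖ * ENNReal.ofReal b ^ (n - 1) := by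
          gcongr
          exact (volume_Ioc_diff_Ioc_le _ _ _).trans (ENNReal.ofReal_le_ofReal hcoord)
      _ = ENNReal.ofReal (‖z - y‖ * b ^ (n - 1)) := by
          rw [ENNReal.ofReal_mul (norm_nonneg _), ENNReal.ofReal_pow hb]
  calc volume {a : Euc n | z ∈ cubeSet n a b ∧ y ∉ cubeSet n a b}
      ≤ ∑ i, volume (slab i) := (measure_mono hcover).trans (measure_iUnion_fintype_le _ _)
    _ ≤ ∑ _i : Fin n, ENNReal.ofReal (‖z - y‖ * b ^ (n - 1)) := Finset.sum_le_sum fun i _ => hslab i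
    _ = ENNReal.ofReal (n * ‖z - y‖ * b ^ (n - 1)) := by
        rw [Finset.sum_const, Finset.card_univ, Fintype.card_fin, nsmul_eq_mul, mul_assoc,
          ENNReal.ofReal_mul (Nat.cast_nonneg n), ENNReal.ofReal_natCast]

end CornerVolume

lemma toReal_inv_le_inv_of_ofReal_le {c : ℝ} {t : ℝ≥0∞} (hc : 0 < c) (hct : ENNReal.ofReal c ≤ t)
    (ht : t ≠ ⊤) : t.toReal⁻¹ ≤ c⁻¹ :=
  inv_anti₀ hc (by simpa [ENNReal.toReal_ofReal hc.le] using ENNReal.toReal_mono ht hct)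

theorem LambdaM_le {n d : ℕ} (hnd : n ≤ d) (hn : 0 < n) {ν : Measure (Euc d)} {c₀ : ℝ}
    (hc₀ : 0 < c₀) {m : ℤ}
    (hν : ∀ a : Euc n, ENNReal.ofReal (c₀ * (2 : ℝ) ^ (-(m * (n : ℤ)))) ≤ ν (Dgrid n d hnd a m) ∧
      ν (Dgrid n d hnd a m) < ⊤) (x y z : Euc d) :
    LambdaM n d hnd ν m x z y
      ≤ n / c₀ * (2 : ℝ) ^ (m * ((n : ℤ) + 1)) * ‖projn n d hnd z - projn n d hnd y‖ := by
  set r : ℝ := ‖projn n d hnd z - projn n d hnd y‖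
  set S : Set (Euc n) :=
    {a | x ∈ Dgrid n d hnd a m ∧ z ∈ Dgrid n d hnd a m ∧ y ∉ Dgrid n d hnd a m}
  have hS : volume S ≤ ENNReal.ofReal (n * r * ((2 : ℝ) ^ (-m)) ^ (n - 1)) :=
    (measure_mono fun a ha => ha.2).trans
      (volume_setOf_mem_cubeSet_notMem_le _ _ (by positivity))
  have hf (a : Euc n) : ‖(ν (Dgrid n d hnd a m)).toReal⁻¹‖ ≤ c₀⁻¹ * (2 : ℝ) ^ (m * (n : ℤ)) := by
    rw [Real.norm_of_nonneg (by positivity)]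
    refine (toReal_inv_le_inv_of_ofReal_le (by positivity) (hν a).1 (hν a).2.ne).trans_eq ?_
    rw [mul_inv, zpow_neg, inv_inv]
  have hint : ∫ a in S, (ν (Dgrid n d hnd a m)).toReal⁻¹
      ≤ c₀⁻¹ * (2 : ℝ) ^ (m * (n : ℤ)) * (n * r * ((2 : ℝ) ^ (-m)) ^ (n - 1)) :=
    (le_abs_self _).trans <|
      (norm_setIntegral_le_of_norm_le_const_ae' (hS.trans_lt ENNReal.ofReal_lt_top)
        (ae_of_all _ fun a _ => hf a)).trans <| by
      gcongr
      exact ENNReal.toReal_le_of_le_ofReal (by positivity) hS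
  have h2 : (2 : ℝ) ^ m ≠ 0 := by positivity
  calc LambdaM n d hnd ν m x z y
      = (2 : ℝ) ^ (m * (n : ℤ)) * ∫ a in S, (ν (Dgrid n d hnd a m)).toReal⁻¹ := rfl
    _ ≤ (2 : ℝ) ^ (m * (n : ℤ)) * (c₀⁻¹ * (2 : ℝ) ^ (m * (n : ℤ)) *
          (n * r * ((2 : ℝ) ^ (-m)) ^ (n - 1))) := by gcongr
    _ = n / c₀ * (2 : ℝ) ^ (m * ((n : ℤ) + 1)) * r := by
        rw [pow_sub₀ _ (by positivity) hn, zpow_mul, zpow_mul, zpow_add_one₀ h2, zpow_natCast,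
          zpow_neg, inv_pow, pow_one]
        field_simp

/-- (Claim 4.4, first bound.) If `ν(D_m^a) ≥ c₀ 2^{-mn}` for all `a, m`,
then `Λ_m^ν(x,z;y) ≤ C 2^{m(n+1)} |z̃ − ỹ|`; in particular, if `|z̃ − ỹ| ≤ 3√n 2^{-j}` then
`Λ_m^ν(x,z;y) ≤ C' 2^{m(n+1)−j}`, with `C, C'` depending only on `n` and `c₀`. -/
theorem Lambda_bound_proj_dist
    (n : ℕ) (hn : 0 < n) (c₀ : ℝ) (hc₀ : 0 < c₀) :
    ∃ C C' : ℝ, 0 < C ∧ 0 < C' ∧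
      ∀ (d : ℕ) (hnd : n < d) (ν : Measure (Euc d)),
        (∀ (a : Euc n) (m : ℤ),
          ENNReal.ofReal (c₀ * (2 : ℝ) ^ (-(m * (n : ℤ)))) ≤ ν (Dgrid n d hnd.le a m) ∧
            ν (Dgrid n d hnd.le a m) < ⊤) →
        ∀ (m : ℤ) (x y z : Euc d),
          LambdaM n d hnd.le ν m x z y
              ≤ C * (2 : ℝ) ^ (m * ((n : ℤ) + 1)) *
                ‖projn n d hnd.le z - projn n d hnd.le y‖ ∧
          ∀ j : ℤ,
            ‖projn n d hnd.le z - projn n d hnd.le y‖ ≤ 3 * Real.sqrt n * (2 : ℝ) ^ (-j) →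
            LambdaM n d hnd.le ν m x z y ≤ C' * (2 : ℝ) ^ (m * ((n : ℤ) + 1) - j) := by
  have hsqrt : 0 < Real.sqrt n := Real.sqrt_pos.2 (Nat.cast_pos.2 hn)
  refine ⟨n / c₀, n / c₀ * (3 * Real.sqrt n), by positivity, by positivity,
    fun d hnd ν hν m x y z => ?_⟩
  have hΛ := LambdaM_le hnd.le hn hc₀ (fun a => hν a m) x y z
  refine ⟨hΛ, fun j hj => hΛ.trans ?_⟩
  calc n / c₀ * (2 : ℝ) ^ (m * ((n : ℤ) + 1)) * ‖projn n d hnd.le z - projn n d hnd.le y‖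
      ≤ n / c₀ * (2 : ℝ) ^ (m * ((n : ℤ) + 1)) * (3 * Real.sqrt n * (2 : ℝ) ^ (-j)) := by gcongr
    _ = n / c₀ * (3 * Real.sqrt n) * (2 : ℝ) ^ (m * ((n : ℤ) + 1) - j) := by
        rw [zpow_sub₀ two_ne_zero, zpow_neg, div_eq_mul_inv _ ((2 : ℝ) ^ j)]
        ring
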